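/- arXiv:1604.04297 — 3 statements merged into one kernel-verified Lean document; each statement's English description precedes it below -/
import Mathlib

section
/- Let α, β ∈ (0,1), C_f, C_g > 0, h > 0 and t ∈ ℝ. Let f : ℝ → ℝ be Hölder of exponent α with constant C_f and g : ℝ → ℝ be Hölder of exponent β with constant C_g, both on an interval containing [t−h, t+h]. Then the h-scale derivative of the product satisfies |□_h(f·g)(t) − □_h f(t)·g(t) − f(t)·□_h g(t)| ≤ √2·C_f·C_g·h^{α+β−1}, where |·| is the complex modulus. -/
/-- Delta derivative: `Δ_h[f](t) = (f(t+h) − f(t))/h`. -/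
noncomputable def deltaD (f : ℝ → ℝ) (h t : ℝ) : ℝ := (f (t + h) - f t) / h

/-- Nabla derivative: `∇_h[f](t) = (f(t) − f(t−h))/h`. -/
noncomputable def nablaD (f : ℝ → ℝ) (h t : ℝ) : ℝ := (f t - f (t - h)) / h

/-- The `h`-scale derivative:
`□_h f(t) = (1/2)[(Δ_h[f](t) + ∇_h[f](t)) + i(Δ_h[f](t) − ∇_h[f](t))]`. -/
noncomputable def scaleD (f : ℝ → ℝ) (h t : ℝ) : ℂ :=
  (1 / 2 : ℂ) * (((deltaD f h t + nablaD f h t : ℝ) : ℂ)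
    + Complex.I * ((deltaD f h t - nablaD f h t : ℝ) : ℂ))

/-!
Both one-sided difference quotients satisfy an exact Leibniz rule up to the product of the two
increments divided by `h`; for Hölder functions each such product is at most
`C_f C_g h^α h^β / h`. The scale derivative packs the two defects `a`, `b` into the complex
number `((a + b) + i (a - b)) / 2`, whose modulus is `√((a² + b²) / 2) ≤ max |a| |b|`.
-/

noncomputable def scaleComb (a b : ℝ) : ℂ :=
  (1 / 2 : ℂ) * (((a + b : ℝ) : ℂ) + Complex.I * ((a - b : ℝ) : ℂ))

theorem scaleD_eq_scaleComb (f : ℝ → ℝ) (h t : ℝ) :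
    scaleD f h t = scaleComb (deltaD f h t) (nablaD f h t) :=
  rfl

theorem scaleComb_re (a b : ℝ) : (scaleComb a b).re = (a + b) / 2 := by
  simp [scaleComb, div_eq_inv_mul]

theorem scaleComb_im (a b : ℝ) : (scaleComb a b).im = (a - b) / 2 := by
  simp [scaleComb, div_eq_inv_mul]

theorem norm_scaleComb_le {a b M : ℝ} (ha : |a| ≤ M) (hb : |b| ≤ M) :
    ‖scaleComb a b‖ ≤ M := by
  have hM : 0 ≤ M := (abs_nonneg a).trans ha
  rw [Complex.norm_def, Real.sqrt_le_left hM, Complex.normSq_apply, scaleComb_re, scaleComb_im]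
  nlinarith [sq_abs a, sq_abs b, abs_nonneg a, abs_nonneg b]

section DifferenceQuotients

variable (f g : ℝ → ℝ) (h t : ℝ)

theorem deltaD_mul :
    deltaD (fun s => f s * g s) h t = deltaD f h t * g t + f t * deltaD g h t
      + (f (t + h) - f t) * (g (t + h) - g t) / h := by
  simp only [deltaD]
  ring

theorem nablaD_mul :
    nablaD (fun s => f s * g s) h t = nablaD f h t * g t + f t * nablaD g h t
      - (f t - f (t - h)) * (g t - g (t - h)) / h := by
  simp only [nablaD]
  ring

theorem scaleD_mul_sub :
    scaleD (fun s => f s * g s) h t - scaleD f h t * (g t : ℂ) - (f t : ℂ) * scaleD g h t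
      = scaleComb ((f (t + h) - f t) * (g (t + h) - g t) / h)
          (-((f t - f (t - h)) * (g t - g (t - h)) / h)) := by
  simp only [scaleD_eq_scaleComb, scaleComb, deltaD_mul, nablaD_mul]
  push_cast
  ring

end DifferenceQuotients

theorem abs_sub_le_of_holderOn {f : ℝ → ℝ} {S : Set ℝ} {C α x y : ℝ}
    (hf : ∀ s ∈ S, ∀ u ∈ S, |f u - f s| ≤ C * |u - s| ^ α) (hx : x ∈ S) (hy : y ∈ S)
    (hxy : x ≤ y) : |f y - f x| ≤ C * (y - x) ^ α := by
  simpa only [abs_of_nonneg (sub_nonneg.2 hxy)] using hf x hx y hy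

theorem abs_mul_div_le_rpow {a b Ca Cb α β h : ℝ} (hh : 0 < h)
    (ha : |a| ≤ Ca * h ^ α) (hb : |b| ≤ Cb * h ^ β) :
    |a * b / h| ≤ Ca * Cb * h ^ (α + β - 1) := by
  rw [Real.rpow_sub hh, Real.rpow_add hh, Real.rpow_one, abs_div, abs_mul, abs_of_pos hh]
  calc |a| * |b| / h ≤ Ca * h ^ α * (Cb * h ^ β) / h := by
        gcongr
        exact (abs_nonneg a).trans ha
    _ = Ca * Cb * (h ^ α * h ^ β / h) := by ring

theorem stmt_4_general (α β Cf Cg h t : ℝ)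
    (hh : 0 < h) (f g : ℝ → ℝ)
    (hf : ∀ s ∈ Set.Icc (t - h) (t + h), ∀ u ∈ Set.Icc (t - h) (t + h),
      |f u - f s| ≤ Cf * |u - s| ^ α)
    (hg : ∀ s ∈ Set.Icc (t - h) (t + h), ∀ u ∈ Set.Icc (t - h) (t + h),
      |g u - g s| ≤ Cg * |u - s| ^ β) :
    ‖scaleD (fun s => f s * g s) h t
        - scaleD f h t * (g t : ℂ) - (f t : ℂ) * scaleD g h t‖
      ≤ Real.sqrt 2 * Cf * Cg * h ^ (α + β - 1) := by
  have ht : t ∈ Set.Icc (t - h) (t + h) := ⟨by linarith, by linarith⟩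
  have ht_right : t + h ∈ Set.Icc (t - h) (t + h) := ⟨by linarith, le_rfl⟩
  have ht_left : t - h ∈ Set.Icc (t - h) (t + h) := ⟨le_rfl, by linarith⟩
  have hf_right := abs_sub_le_of_holderOn hf ht ht_right (by linarith)
  have hg_right := abs_sub_le_of_holderOn hg ht ht_right (by linarith)
  have hf_left := abs_sub_le_of_holderOn hf ht_left ht (by linarith)
  have hg_left := abs_sub_le_of_holderOn hg ht_left ht (by linarith)
  rw [add_sub_cancel_left] at hf_right hg_right
  rw [sub_sub_cancel] at hf_left hg_left
  have h_right := abs_mul_div_le_rpow hh hf_right hg_right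
  have h_left := abs_mul_div_le_rpow hh hf_left hg_left
  rw [← abs_neg] at h_left
  rw [scaleD_mul_sub, mul_assoc, mul_assoc, ← mul_assoc Cf]
  exact (norm_scaleComb_le h_right h_left).trans
    (le_mul_of_one_le_left ((abs_nonneg _).trans h_right) Real.one_lt_sqrt_two.le)

/-- Quantitative Leibniz estimate for the `h`-scale derivative of a product of Hölder
functions: if `f` is `α`-Hölder with constant `C_f` and `g` is `β`-Hölder with constant
`C_g` on `[t−h, t+h]`, then
`|□_h(f·g)(t) − □_h f(t)·g(t) − f(t)·□_h g(t)| ≤ √2·C_f·C_g·h^{α+β−1}`. -/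
theorem stmt_4 (α β Cf Cg h t : ℝ) (hα : α ∈ Set.Ioo (0 : ℝ) 1) (hβ : β ∈ Set.Ioo (0 : ℝ) 1)
    (hCf : 0 < Cf) (hCg : 0 < Cg) (hh : 0 < h) (f g : ℝ → ℝ)
    (hf : ∀ s ∈ Set.Icc (t - h) (t + h), ∀ u ∈ Set.Icc (t - h) (t + h),
      |f u - f s| ≤ Cf * |u - s| ^ α)
    (hg : ∀ s ∈ Set.Icc (t - h) (t + h), ∀ u ∈ Set.Icc (t - h) (t + h),
      |g u - g s| ≤ Cg * |u - s| ^ β) :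
    ‖scaleD (fun s => f s * g s) h t
        - scaleD f h t * (g t : ℂ) - (f t : ℂ) * scaleD g h t‖
      ≤ Real.sqrt 2 * Cf * Cg * h ^ (α + β - 1) :=
  stmt_4_general α β Cf Cg h t hh f g hf hg
end

section
/- (Leibniz rule for the scale derivative, convergent case.) Let α, β ∈ (0,1) with α + β > 1, let δ > 0 and t ∈ ℝ, and let f : ℝ → ℝ be Hölder of exponent α and g : ℝ → ℝ be Hölder of exponent β on [t−δ, t+δ]. Suppose there exist complex numbers F and G such that □_h f(t) → F and □_h g(t) → G as h → 0⁺. Then □_h(f·g)(t) → F·g(t) + f(t)·G as h → 0⁺. -/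
open Filter

/-- Leibniz rule for the scale derivative (convergent case): if `α + β > 1`, `f` is
`α`-Hölder and `g` is `β`-Hölder on `[t−δ, t+δ]`, and `□_h f(t) → F`, `□_h g(t) → G`
as `h → 0⁺`, then `□_h(f·g)(t) → F·g(t) + f(t)·G` as `h → 0⁺`. -/
theorem stmt_5 (α β δ t : ℝ) (hα : α ∈ Set.Ioo (0 : ℝ) 1) (hβ : β ∈ Set.Ioo (0 : ℝ) 1)
    (hαβ : 1 < α + β) (hδ : 0 < δ) (f g : ℝ → ℝ)
    (hf : ∃ C > (0 : ℝ), ∀ s ∈ Set.Icc (t - δ) (t + δ), ∀ u ∈ Set.Icc (t - δ) (t + δ),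
      |f u - f s| ≤ C * |u - s| ^ α)
    (hg : ∃ C > (0 : ℝ), ∀ s ∈ Set.Icc (t - δ) (t + δ), ∀ u ∈ Set.Icc (t - δ) (t + δ),
      |g u - g s| ≤ C * |u - s| ^ β)
    (F G : ℂ)
    (hF : Tendsto (fun h : ℝ => scaleD f h t) (nhdsWithin 0 (Set.Ioi 0)) (nhds F))
    (hG : Tendsto (fun h : ℝ => scaleD g h t) (nhdsWithin 0 (Set.Ioi 0)) (nhds G)) :
    Tendsto (fun h : ℝ => scaleD (fun s => f s * g s) h t) (nhdsWithin 0 (Set.Ioi 0))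
      (nhds (F * (g t : ℂ) + (f t : ℂ) * G)) := by
  obtain ⟨Cf, hCf, hf⟩ := hf
  obtain ⟨Cg, hCg, hg⟩ := hg
  set A : ℝ → ℝ := fun h => (f (t + h) - f t) * (g (t + h) - g t) / h with hA
  set B : ℝ → ℝ := fun h => (f t - f (t - h)) * (g t - g (t - h)) / h with hB
  -- the error term tends to zero
  have hpow : Tendsto (fun h : ℝ => Cf * Cg * h ^ (α + β - 1))
      (nhdsWithin 0 (Set.Ioi 0)) (nhds 0) := by
    have hp : (0 : ℝ) < α + β - 1 := by linarith
    have h1 : Tendsto (fun h : ℝ => h ^ (α + β - 1)) (nhds 0) (nhds 0) := by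
      simpa [Real.zero_rpow (ne_of_gt hp)] using
        (Real.continuousAt_rpow_const 0 (α + β - 1) (Or.inr hp.le)).tendsto
    simpa using (h1.const_mul (Cf * Cg)).mono_left nhdsWithin_le_nhds
  have key : ∀ (u : ℝ), u ∈ Set.Icc (t - δ) (t + δ) → ∀ h : ℝ, 0 < h → |u - t| ≤ h →
      |(f u - f t) * (g u - g t) / h| ≤ Cf * Cg * h ^ (α + β - 1) := by
    intro u hu h hh hle
    have ht : t ∈ Set.Icc (t - δ) (t + δ) := by
      constructor <;> linarith
    have h1 := hf t ht u hu
    have h2 := hg t ht u hu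
    have hrα : |u - t| ^ α ≤ h ^ α :=
      Real.rpow_le_rpow (abs_nonneg _) hle (le_of_lt hα.1)
    have hrβ : |u - t| ^ β ≤ h ^ β :=
      Real.rpow_le_rpow (abs_nonneg _) hle (le_of_lt hβ.1)
    have hfa : |f u - f t| ≤ Cf * h ^ α :=
      h1.trans (by nlinarith [Real.rpow_nonneg (abs_nonneg (u - t)) α])
    have hga : |g u - g t| ≤ Cg * h ^ β :=
      h2.trans (by nlinarith [Real.rpow_nonneg (abs_nonneg (u - t)) β])
    have hprod : |(f u - f t) * (g u - g t)| ≤ Cf * h ^ α * (Cg * h ^ β) := by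
      rw [abs_mul]
      exact mul_le_mul hfa hga (abs_nonneg _) (by positivity)
    have heq : Cf * Cg * h ^ (α + β - 1) = Cf * h ^ α * (Cg * h ^ β) / h := by
      rw [Real.rpow_sub hh, Real.rpow_add hh, Real.rpow_one]
      field_simp
    rw [abs_div, abs_of_pos hh, heq]
    exact div_le_div_of_nonneg_right hprod hh.le |>.trans_eq rfl
  have hAlim : Tendsto A (nhdsWithin 0 (Set.Ioi 0)) (nhds 0) := by
    apply squeeze_zero_norm' _ hpow
    filter_upwards [Ioo_mem_nhdsGT_of_mem (by constructor <;> [rfl; exact hδ] :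
        (0:ℝ) ∈ Set.Ico 0 δ)] with h hh
    have hh0 : 0 < h := hh.1
    have hu : t + h ∈ Set.Icc (t - δ) (t + δ) := by
      constructor <;> [linarith [hh.2]; linarith [le_of_lt hh.2]]
    simpa using key (t + h) hu h hh0 (by simp [abs_of_pos hh0])
  have hBlim : Tendsto B (nhdsWithin 0 (Set.Ioi 0)) (nhds 0) := by
    apply squeeze_zero_norm' _ hpow
    filter_upwards [Ioo_mem_nhdsGT_of_mem (by constructor <;> [rfl; exact hδ] :
        (0:ℝ) ∈ Set.Ico 0 δ)] with h hh
    have hh0 : 0 < h := hh.1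
    have hu : t - h ∈ Set.Icc (t - δ) (t + δ) := by
      constructor <;> [linarith [le_of_lt hh.2]; linarith]
    have := key (t - h) hu h hh0 (by rw [abs_of_nonpos (by linarith)]; linarith)
    simpa [hB, abs_div, abs_mul, abs_sub_comm (f (t-h)) (f t),
      abs_sub_comm (g (t-h)) (g t)] using this
  -- error term as a complex function
  set E : ℝ → ℂ := fun h => (1 / 2 : ℂ) * (((A h - B h : ℝ) : ℂ)
      + Complex.I * ((A h + B h : ℝ) : ℂ)) with hE
  have hElim : Tendsto E (nhdsWithin 0 (Set.Ioi 0)) (nhds 0) := by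
    have h1 : Tendsto (fun h => ((A h - B h : ℝ) : ℂ)) (nhdsWithin 0 (Set.Ioi 0))
        (nhds 0) := by
      have := (hAlim.sub hBlim); rw [sub_zero] at this
      simpa [Function.comp_def] using (Complex.continuous_ofReal.tendsto 0).comp this
    have h2 : Tendsto (fun h => ((A h + B h : ℝ) : ℂ)) (nhdsWithin 0 (Set.Ioi 0))
        (nhds 0) := by
      have := (hAlim.add hBlim); rw [add_zero] at this
      simpa [Function.comp_def] using (Complex.continuous_ofReal.tendsto 0).comp this
    have := ((h1.add (h2.const_mul Complex.I)).const_mul (1 / 2 : ℂ))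
    simpa [hE] using this
  have hmain : Tendsto (fun h : ℝ => scaleD f h t * (g t : ℂ)
      + (f t : ℂ) * scaleD g h t + E h) (nhdsWithin 0 (Set.Ioi 0))
      (nhds (F * (g t : ℂ) + (f t : ℂ) * G)) := by
    have := ((hF.mul_const ((g t : ℂ))).add (hG.const_mul ((f t : ℂ)))).add hElim
    simpa using this
  refine hmain.congr' ?_ |>.mono_left le_rfl
  filter_upwards [self_mem_nhdsWithin] with h hh
  have hne : h ≠ 0 := ne_of_gt hh
  simp only [scaleD, deltaD, nablaD, hE, hA, hB]
  push_cast
  field_simp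
  ring
end

section
/- (Generalized variational principle of Herglotz, differentiable case.) Let a < b, z_a ∈ ℝ, and let L : ℝ × ℝ × ℝ × ℝ → ℝ be of class C². Let x : ℝ → ℝ be of class C² and z : ℝ → ℝ be of class C¹ with z'(t) = L(t, x(t), x'(t), z(t)) for all t ∈ [a,b] and z(a) = z_a. Assume that for every C² function η : ℝ → ℝ with η(a) = η(b) = 0 there exists a function Z : ℝ × ℝ → ℝ of class C² such that: Z(0,t) = z(t) for all t ∈ [a,b]; ∂Z/∂t(ε,t) = L(t, x(t)+ε·η(t), x'(t)+ε·η'(t), Z(ε,t)) for all ε ∈ ℝ and t ∈ [a,b]; Z(ε,a) = z_a for all ε ∈ ℝ; and ∂Z/∂ε(0,b) = 0. Then for all t ∈ [a,b]: (d/dt)[∂₃L(t, x(t), x'(t), z(t))] = ∂₂L(t, x(t), x'(t), z(t)) + ∂₄L(t, x(t), x'(t), z(t))·∂₃L(t, x(t), x'(t), z(t)). -/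
/-! Put `g t = ∂Z/∂ε (0, t)`. Differentiating `∂Z/∂t (ε, t) = L(t, x + εη, x' + εη', Z)` in `ε` at
`ε = 0` and swapping the mixed partials shows that `g` solves the linearized equation
`g' = ∂₄L · g + ∂₂L · η + ∂₃L · η'`, with `g a = g b = 0`. With the integrating factor
`E t = exp (-∫ₐᵗ ∂₄L)` this gives `∫ₐᵇ (∂₂L · η + ∂₃L · η') E = 0` for every admissible `η`, so by
du Bois-Reymond's lemma `(∂₃L · E)' = ∂₂L · E`, which is the Herglotz equation after dividing
by `E > 0`. -/

open Set MeasureTheory intervalIntegral Function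
open scoped ContDiff

theorem eqOn_zero_of_forall_integral_mul_eq_zero {f : ℝ → ℝ} {a b : ℝ} (hab : a < b)
    (hf : ContinuousOn f (Icc a b))
    (h : ∀ η : ℝ → ℝ, ContDiff ℝ ∞ η → η a = 0 → η b = 0 → ∫ t in a..b, f t * η t = 0) :
    EqOn f 0 (Icc a b) := by
  have hae : ∀ᵐ t, t ∈ Ioo a b → f t = 0 := by
    refine isOpen_Ioo.ae_eq_zero_of_integral_contDiff_smul_eq_zero
      ((hf.mono Ioo_subset_Icc_self).locallyIntegrableOn measurableSet_Ioo)
      fun η hη _ hηU => ?_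
    have hη0 : ∀ t ∉ Ioo a b, η t = 0 := fun t ht =>
      image_eq_zero_of_notMem_tsupport (ht ∘ (hηU ·))
    have := h η hη (hη0 a (by simp)) (hη0 b (by simp))
    rw [integral_of_le hab.le, integral_Ioc_eq_integral_Ioo,
      setIntegral_eq_integral_of_forall_compl_eq_zero fun t ht => by simp [hη0 t ht]] at this
    simpa [mul_comm] using this
  refine Measure.eqOn_of_ae_eq (μ := volume) ?_ hf continuousOn_const ?_
  · rwa [← Measure.restrict_congr_set Ioo_ae_eq_Icc, Filter.EventuallyEq,
      ae_restrict_iff' measurableSet_Ioo]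
  · rw [interior_Icc, closure_Ioo hab.ne]

theorem eqOn_deriv_of_forall_integral_mul_add_mul_deriv_eq_zero {p q : ℝ → ℝ} {a b : ℝ}
    (hab : a < b) (hp : Continuous p) (hq : ContDiff ℝ 1 q)
    (h : ∀ η : ℝ → ℝ, ContDiff ℝ ∞ η → η a = 0 → η b = 0 →
      ∫ t in a..b, p t * η t + q t * deriv η t = 0) :
    EqOn (deriv q) p (Icc a b) := by
  have hq' : Continuous (deriv q) := hq.continuous_deriv le_rfl
  refine fun t ht => (sub_eq_zero.1 (eqOn_zero_of_forall_integral_mul_eq_zero hab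
    (hp.sub hq').continuousOn (fun η hη hηa hηb => ?_) ht)).symm
  have hη' : Continuous (deriv η) := hη.continuous_deriv (by simp)
  have hparts := integral_mul_deriv_eq_deriv_mul (a := a) (b := b)
    (fun t _ => (hq.differentiable one_ne_zero t).hasDerivAt)
    (fun t _ => (hη.differentiable (by simp) t).hasDerivAt)
    (hq'.intervalIntegrable a b) (hη'.intervalIntegrable a b)
  have hpη : IntervalIntegrable (fun t => p t * η t) volume a b :=
    (hp.mul hη.continuous).intervalIntegrable a b
  have hqη' : IntervalIntegrable (fun t => q t * deriv η t) volume a b :=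
    (hq.continuous.mul hη').intervalIntegrable a b
  have hq'η : IntervalIntegrable (fun t => deriv q t * η t) volume a b :=
    (hq'.mul hη.continuous).intervalIntegrable a b
  have := h η hη hηa hηb
  rw [integral_add hpη hqη', hparts, hηa, hηb] at this
  simp only [Pi.sub_apply, sub_mul]
  rw [integral_sub hpη hq'η]
  linarith

theorem hasDerivAt_exp_neg_integral {p : ℝ → ℝ} (hp : Continuous p) (a t : ℝ) :
    HasDerivAt (fun t => Real.exp (-∫ s in a..t, p s))
      (-p t * Real.exp (-∫ s in a..t, p s)) t := by
  simpa [mul_comm] using ((hp.integral_hasStrictDerivAt a t).hasDerivAt.neg).exp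

theorem integral_mul_exp_neg_integral_eq_zero {g p q : ℝ → ℝ} {a b : ℝ}
    (hp : Continuous p) (hq : Continuous q)
    (hg : ∀ t ∈ uIcc a b, HasDerivAt g (p t * g t + q t) t) (ha : g a = 0) (hb : g b = 0) :
    ∫ t in a..b, q t * Real.exp (-∫ s in a..t, p s) = 0 := by
  set E : ℝ → ℝ := fun t => Real.exp (-∫ s in a..t, p s)
  have hE : ∀ t, HasDerivAt E (-p t * E t) t := hasDerivAt_exp_neg_integral hp a
  have hEc : Continuous E := continuous_iff_continuousAt.2 fun t => (hE t).continuousAt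
  have hgE : ∀ t ∈ uIcc a b, HasDerivAt (fun s => g s * E s) (q t * E t) t := fun t ht =>
    ((hg t ht).mul (hE t)).congr_deriv (by ring)
  rw [integral_eq_sub_of_hasDerivAt hgE ((hq.mul hEc).intervalIntegrable a b)]
  simp [ha, hb]

theorem eqOn_deriv_of_forall_exists_linearized_variation {p q r : ℝ → ℝ} {a b : ℝ}
    (hab : a < b) (hp : Continuous p) (hq : ContDiff ℝ 1 q) (hr : Continuous r)
    (h : ∀ η : ℝ → ℝ, ContDiff ℝ ∞ η → η a = 0 → η b = 0 → ∃ g : ℝ → ℝ, g a = 0 ∧ g b = 0 ∧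
      ∀ t ∈ Icc a b, HasDerivAt g (r t * g t + (η t * p t + deriv η t * q t)) t) :
    EqOn (deriv q) (fun t => p t + r t * q t) (Icc a b) := by
  set E : ℝ → ℝ := fun t => Real.exp (-∫ s in a..t, r s)
  have hE : ∀ t, HasDerivAt E (-r t * E t) t := hasDerivAt_exp_neg_integral hr a
  have hEc : Continuous E := continuous_iff_continuousAt.2 fun t => (hE t).continuousAt
  have hE1 : ContDiff ℝ 1 E := by
    refine contDiff_one_iff_deriv.2 ⟨fun t => (hE t).differentiableAt, ?_⟩
    rw [show deriv E = fun t => -r t * E t from funext fun t => (hE t).deriv]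
    exact hr.neg.mul hEc
  have hEL : EqOn (deriv fun t => q t * E t) (fun t => p t * E t) (Icc a b) := by
    refine eqOn_deriv_of_forall_integral_mul_add_mul_deriv_eq_zero hab (hp.mul hEc) (hq.mul hE1)
      fun η hη hηa hηb => ?_
    obtain ⟨g, hga, hgb, hg⟩ := h η hη hηa hηb
    have hη' : Continuous (deriv η) := hη.continuous_deriv (by simp)
    rw [← integral_mul_exp_neg_integral_eq_zero hr
      ((hη.continuous.mul hp).add (hη'.mul hq.continuous)) (by rwa [uIcc_of_le hab.le]) hga hgb]
    congr 1 with t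
    simp only [E, Pi.add_apply, Pi.mul_apply]
    ring
  intro t ht
  have hqE : deriv (fun s => q s * E s) t = deriv q t * E t + q t * (-r t * E t) :=
    ((hq.differentiable one_ne_zero t).hasDerivAt.mul (hE t)).deriv
  rw [hEL ht] at hqE
  have hE0 : E t ≠ 0 := (Real.exp_pos _).ne'
  field_simp at hqE
  linarith

section Slices

variable {G : Type*} [NormedAddCommGroup G] [NormedSpace ℝ G]

theorem HasFDerivAt.hasDerivAt_slice_fst {F : ℝ × ℝ → G} {F' : ℝ × ℝ →L[ℝ] G} {e s : ℝ}
    (hF : HasFDerivAt F F' (e, s)) : HasDerivAt (fun e' => F (e', s)) (F' (1, 0)) e :=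
  hF.comp_hasDerivAt e ((hasDerivAt_id e).prodMk (hasDerivAt_const e s))

theorem HasFDerivAt.hasDerivAt_slice_snd {F : ℝ × ℝ → G} {F' : ℝ × ℝ →L[ℝ] G} {e s : ℝ}
    (hF : HasFDerivAt F F' (e, s)) : HasDerivAt (fun s' => F (e, s')) (F' (0, 1)) s :=
  hF.comp_hasDerivAt s ((hasDerivAt_const s e).prodMk (hasDerivAt_id s))

variable {F : ℝ × ℝ × ℝ × ℝ → G} {F' : ℝ × ℝ × ℝ × ℝ →L[ℝ] G} {t y v w : ℝ}

theorem HasFDerivAt.hasDerivAt_slice₂ (hF : HasFDerivAt F F' (t, y, v, w)) :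
    HasDerivAt (fun y' => F (t, y', v, w)) (F' (0, 1, 0, 0)) y :=
  hF.comp_hasDerivAt y ((hasDerivAt_const y t).prodMk
    ((hasDerivAt_id y).prodMk ((hasDerivAt_const y v).prodMk (hasDerivAt_const y w))))

theorem HasFDerivAt.hasDerivAt_slice₃ (hF : HasFDerivAt F F' (t, y, v, w)) :
    HasDerivAt (fun v' => F (t, y, v', w)) (F' (0, 0, 1, 0)) v :=
  hF.comp_hasDerivAt v ((hasDerivAt_const v t).prodMk
    ((hasDerivAt_const v y).prodMk ((hasDerivAt_id v).prodMk (hasDerivAt_const v w))))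

theorem HasFDerivAt.hasDerivAt_slice₄ (hF : HasFDerivAt F F' (t, y, v, w)) :
    HasDerivAt (fun w' => F (t, y, v, w')) (F' (0, 0, 0, 1)) w :=
  hF.comp_hasDerivAt w ((hasDerivAt_const w t).prodMk
    ((hasDerivAt_const w y).prodMk ((hasDerivAt_const w v).prodMk (hasDerivAt_id w))))

end Slices

theorem hasDerivAt_deriv_comm {Z : ℝ → ℝ → ℝ} (hZ : ContDiff ℝ 2 (uncurry Z)) (ε t : ℝ) :
    HasDerivAt (fun s => deriv (fun e => Z e s) ε)
      (deriv (fun e => deriv (fun s => Z e s) t) ε) t := by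
  set D := fderiv ℝ (uncurry Z)
  have hZd : Differentiable ℝ (uncurry Z) := hZ.differentiable two_ne_zero
  have hD : Differentiable ℝ D :=
    (hZ.fderiv_right (m := 1) one_add_one_eq_two.le).differentiable one_ne_zero
  have hfst : ∀ e s, deriv (fun e' => Z e' s) e = D (e, s) (1, 0) := fun e s =>
    (hZd (e, s)).hasFDerivAt.hasDerivAt_slice_fst.deriv
  have hsnd : ∀ e s, deriv (fun s' => Z e s') s = D (e, s) (0, 1) := fun e s =>
    (hZd (e, s)).hasFDerivAt.hasDerivAt_slice_snd.deriv
  simp only [hfst, hsnd]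
  rw [((hD (ε, t)).hasFDerivAt.hasDerivAt_slice_fst.clm_apply (hasDerivAt_const ε _)).deriv,
    ← (hZ.contDiffAt.isSymmSndFDerivAt (by simp)).eq]
  simpa using (hD (ε, t)).hasFDerivAt.hasDerivAt_slice_snd.clm_apply (hasDerivAt_const t _)

theorem ContinuousLinearMap.apply_zero_fst (φ : ℝ × ℝ × ℝ × ℝ →L[ℝ] ℝ) (u v w : ℝ) :
    φ (0, u, v, w) = u * φ (0, 1, 0, 0) + v * φ (0, 0, 1, 0) + w * φ (0, 0, 0, 1) := by
  rw [show ((0, u, v, w) : ℝ × ℝ × ℝ × ℝ) = u • (0, 1, 0, 0) + v • (0, 0, 1, 0) + w • (0, 0, 0, 1)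
    by simp]
  simp only [map_add, map_smul, smul_eq_mul]

theorem hasDerivAt_deriv_variation {F : ℝ × ℝ × ℝ × ℝ → ℝ} {Z : ℝ → ℝ → ℝ} {t y v u u' : ℝ}
    (hF : DifferentiableAt ℝ F (t, y, v, Z 0 t)) (hZ : ContDiff ℝ 2 (uncurry Z))
    (hZt : ∀ ε, deriv (fun s => Z ε s) t = F (t, y + ε * u, v + ε * u', Z ε t)) :
    HasDerivAt (fun s => deriv (fun ε => Z ε s) 0)
      (u * fderiv ℝ F (t, y, v, Z 0 t) (0, 1, 0, 0) + u' * fderiv ℝ F (t, y, v, Z 0 t) (0, 0, 1, 0)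
        + deriv (fun ε => Z ε t) 0 * fderiv ℝ F (t, y, v, Z 0 t) (0, 0, 0, 1)) t := by
  have hZε : HasDerivAt (fun ε => Z ε t) (deriv (fun ε => Z ε t) 0) 0 :=
    (hZ.differentiable two_ne_zero (0, t)).hasFDerivAt.hasDerivAt_slice_fst.differentiableAt
      |>.hasDerivAt
  have hline : ∀ c d : ℝ, HasDerivAt (fun ε : ℝ => c + ε * d) d 0 := fun c d => by
    simpa using ((hasDerivAt_id (0 : ℝ)).mul_const d).const_add c
  have hcurve := hF.hasFDerivAt.comp_hasDerivAt_of_eq 0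
    ((hasDerivAt_const 0 t).prodMk ((hline y u).prodMk ((hline v u').prodMk hZε))) (by simp)
  rw [← ContinuousLinearMap.apply_zero_fst, ← hcurve.deriv]
  simpa only [hZt, comp_def] using hasDerivAt_deriv_comm hZ 0 t

theorem stmt_11_general (a b z_a : ℝ) (hab : a < b)
    (L : ℝ → ℝ → ℝ → ℝ → ℝ)
    (hL : ContDiff ℝ 2 (fun p : ℝ × ℝ × ℝ × ℝ => L p.1 p.2.1 p.2.2.1 p.2.2.2))
    (x z : ℝ → ℝ) (hx : ContDiff ℝ 2 x) (hz : ContDiff ℝ 1 z)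
    (hvar : ∀ η : ℝ → ℝ, ContDiff ℝ 2 η → η a = 0 → η b = 0 →
      ∃ Z : ℝ → ℝ → ℝ,
        ContDiff ℝ 2 (fun p : ℝ × ℝ => Z p.1 p.2) ∧
        (∀ t ∈ Set.Icc a b, Z 0 t = z t) ∧
        (∀ ε : ℝ, ∀ t ∈ Set.Icc a b,
          deriv (fun s => Z ε s) t
            = L t (x t + ε * η t) (deriv x t + ε * deriv η t) (Z ε t)) ∧
        (∀ ε : ℝ, Z ε a = z_a) ∧
        deriv (fun ε => Z ε b) 0 = 0) :
    ∀ t ∈ Set.Icc a b,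
      deriv (fun s => deriv (fun v => L s (x s) v (z s)) (deriv x s)) t
        = deriv (fun y => L t y (deriv x t) (z t)) (x t)
          + deriv (fun w => L t (x t) (deriv x t) w) (z t)
            * deriv (fun v => L t (x t) v (z t)) (deriv x t) := by
  set F : ℝ × ℝ × ℝ × ℝ → ℝ := fun p => L p.1 p.2.1 p.2.2.1 p.2.2.2
  have hFd : Differentiable ℝ F := hL.differentiable two_ne_zero
  set c : ℝ → ℝ × ℝ × ℝ × ℝ := fun t => (t, x t, deriv x t, z t)
  have hc : ContDiff ℝ 1 c :=
    contDiff_id.prodMk ((hx.of_le one_le_two).prodMk ((hx.iterate_deriv' 1 1).prodMk hz))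
  have hP : ∀ e, ContDiff ℝ 1 fun t => fderiv ℝ F (c t) e := fun e =>
    ((hL.fderiv_right one_add_one_eq_two.le).clm_apply contDiff_const).comp hc
  have key := eqOn_deriv_of_forall_exists_linearized_variation hab (hP (0, 1, 0, 0)).continuous
    (hP (0, 0, 1, 0)) (hP (0, 0, 0, 1)).continuous fun η hη hηa hηb => by
      obtain ⟨Z, hZ, hZ0, hZt, hZa, hZb⟩ := hvar η (hη.of_le (by norm_cast)) hηa hηb
      refine ⟨fun s => deriv (fun ε => Z ε s) 0, by simp [hZa], hZb, fun s hs => ?_⟩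
      have := hasDerivAt_deriv_variation (hFd _) hZ (hZt · s hs)
      rw [hZ0 s hs] at this
      exact this.congr_deriv (by ring)
  intro t ht
  have h₂ : deriv (fun y => L t y (deriv x t) (z t)) (x t) = fderiv ℝ F (c t) (0, 1, 0, 0) :=
    (hFd (c t)).hasFDerivAt.hasDerivAt_slice₂.deriv
  have h₃ : ∀ s, deriv (fun v => L s (x s) v (z s)) (deriv x s) = fderiv ℝ F (c s) (0, 0, 1, 0) :=
    fun s => (hFd (c s)).hasFDerivAt.hasDerivAt_slice₃.deriv
  have h₄ : deriv (fun w => L t (x t) (deriv x t) w) (z t) = fderiv ℝ F (c t) (0, 0, 0, 1) :=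
    (hFd (c t)).hasFDerivAt.hasDerivAt_slice₄.deriv
  rw [h₂, h₃, h₄, funext h₃]
  exact key ht

/-- Generalized variational principle of Herglotz (differentiable case): if `(x,z)`
solves `z' = L(t,x,x',z)`, `z(a) = z_a`, and for every admissible variation `η`
(with `η(a) = η(b) = 0`) there is a `C²` family `Z(ε,t)` of solutions with
`Z(0,·) = z`, `Z(ε,a) = z_a` and `∂Z/∂ε(0,b) = 0`, then the Herglotz–Euler–Lagrange
equation holds on `[a,b]`:
`d/dt ∂₃L(t,x,x',z) = ∂₂L(t,x,x',z) + ∂₄L(t,x,x',z)·∂₃L(t,x,x',z)`. -/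
theorem stmt_11 (a b z_a : ℝ) (hab : a < b)
    (L : ℝ → ℝ → ℝ → ℝ → ℝ)
    (hL : ContDiff ℝ 2 (fun p : ℝ × ℝ × ℝ × ℝ => L p.1 p.2.1 p.2.2.1 p.2.2.2))
    (x z : ℝ → ℝ) (hx : ContDiff ℝ 2 x) (hz : ContDiff ℝ 1 z)
    (hzeq : ∀ t ∈ Set.Icc a b, deriv z t = L t (x t) (deriv x t) (z t))
    (hza : z a = z_a)
    (hvar : ∀ η : ℝ → ℝ, ContDiff ℝ 2 η → η a = 0 → η b = 0 →
      ∃ Z : ℝ → ℝ → ℝ,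
        ContDiff ℝ 2 (fun p : ℝ × ℝ => Z p.1 p.2) ∧
        (∀ t ∈ Set.Icc a b, Z 0 t = z t) ∧
        (∀ ε : ℝ, ∀ t ∈ Set.Icc a b,
          deriv (fun s => Z ε s) t
            = L t (x t + ε * η t) (deriv x t + ε * deriv η t) (Z ε t)) ∧
        (∀ ε : ℝ, Z ε a = z_a) ∧
        deriv (fun ε => Z ε b) 0 = 0) :
    ∀ t ∈ Set.Icc a b,
      deriv (fun s => deriv (fun v => L s (x s) v (z s)) (deriv x s)) t
        = deriv (fun y => L t y (deriv x t) (z t)) (x t)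
          + deriv (fun w => L t (x t) (deriv x t) w) (z t)
            * deriv (fun v => L t (x t) v (z t)) (deriv x t) :=
  stmt_11_general a b z_a hab L hL x z hx hz hvar
end
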